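/- arXiv:1203.4772 — 4 statements merged into one kernel-verified Lean document; each statement's English description precedes it below -/
import Mathlib

section
/- Every n-dimensional null-filiform complex Leibniz algebra L admits a basis e_1, e_2, …, e_n in which the only nonzero products are [e_i, e_1] = e_{i+1} for 1 ≤ i ≤ n−1 (i.e. L is isomorphic to the algebra NF_n). -/
/-!
Choose `x ∉ L²`; as `L²` has codimension one, `L = ℂ x + L²`. The Leibniz identity gives
`[L^k, L²] ⊆ L^{k+2}`, hence `L^k = ℂ x^k + L^{k+1}` for the right-normed powers
`x^{k+1} = [x^k, x]`, so `x, x², …, xⁿ` span `L` and, as `dim L = n`, form a basis. The Leibniz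
identity also gives `[y, [z, x]] = [[y, z], x] - [[y, x], z]`, whence by induction right
multiplication by any `x^k` with `k ≥ 2` vanishes. The only products left are
`[x^i, x] = x^{i+1}`, and `x^{n+1} ∈ L^{n+1} = 0`.
-/

open Finset Module

/-- The Leibniz identity for a bilinear bracket `b`. -/
def IsLeibniz {L : Type*} [AddCommGroup L] [Module ℂ L]
    (b : L →ₗ[ℂ] L →ₗ[ℂ] L) : Prop :=
  ∀ x y z, b x (b y z) = b (b x y) z - b (b x z) y

/-- The submodule spanned by all brackets `[S, T]`. -/
def bracketSpan {L : Type*} [AddCommGroup L] [Module ℂ L]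
    (b : L →ₗ[ℂ] L →ₗ[ℂ] L) (S T : Submodule ℂ L) : Submodule ℂ L :=
  Submodule.span ℂ {z | ∃ x ∈ S, ∃ y ∈ T, z = b x y}

/-- The lower central series: `lcs b k` is `L^{k+1}`, i.e. `lcs b 0 = L¹ = L`. -/
def lcs {L : Type*} [AddCommGroup L] [Module ℂ L]
    (b : L →ₗ[ℂ] L →ₗ[ℂ] L) : ℕ → Submodule ℂ L
  | 0 => ⊤
  | k+1 => bracketSpan b (lcs b k) ⊤

/-- The derived series: `derSeries b s` is `L^{[s+1]}`. -/
def derSeries {L : Type*} [AddCommGroup L] [Module ℂ L]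
    (b : L →ₗ[ℂ] L →ₗ[ℂ] L) : ℕ → Submodule ℂ L
  | 0 => ⊤
  | s+1 => bracketSpan b (derSeries b s) (derSeries b s)

/-- The algebra `(L, b)` is nilpotent. -/
def IsNilpotentAlg {L : Type*} [AddCommGroup L] [Module ℂ L]
    (b : L →ₗ[ℂ] L →ₗ[ℂ] L) : Prop :=
  ∃ k, lcs b k = ⊥

/-- The algebra `(L, b)` is solvable. -/
def IsSolvableAlg {L : Type*} [AddCommGroup L] [Module ℂ L]
    (b : L →ₗ[ℂ] L →ₗ[ℂ] L) : Prop :=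
  ∃ s, derSeries b s = ⊥

/-- `I` is a two-sided ideal of `(L, b)`. -/
def IsIdeal {L : Type*} [AddCommGroup L] [Module ℂ L]
    (b : L →ₗ[ℂ] L →ₗ[ℂ] L) (I : Submodule ℂ L) : Prop :=
  ∀ a ∈ I, ∀ y : L, b a y ∈ I ∧ b y a ∈ I

/-- Lower central series of the ideal `I` computed inside `L`:
`idealLCS b I k` is `I^{k+1}`. -/
def idealLCS {L : Type*} [AddCommGroup L] [Module ℂ L]
    (b : L →ₗ[ℂ] L →ₗ[ℂ] L) (I : Submodule ℂ L) : ℕ → Submodule ℂ L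
  | 0 => I
  | k+1 => bracketSpan b (idealLCS b I k) I

/-- `I` is a nilpotent two-sided ideal of `(L, b)`. -/
def IsNilpotentIdeal {L : Type*} [AddCommGroup L] [Module ℂ L]
    (b : L →ₗ[ℂ] L →ₗ[ℂ] L) (I : Submodule ℂ L) : Prop :=
  IsIdeal b I ∧ ∃ k, idealLCS b I k = ⊥

/-- `I` is the nilradical (the maximal nilpotent ideal) of `(L, b)`. -/
def IsNilradical {L : Type*} [AddCommGroup L] [Module ℂ L]
    (b : L →ₗ[ℂ] L →ₗ[ℂ] L) (I : Submodule ℂ L) : Prop :=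
  IsNilpotentIdeal b I ∧ ∀ J : Submodule ℂ L, IsNilpotentIdeal b J → J ≤ I

/-- Isomorphism of bracket algebras. -/
def LeibnizIso {L M : Type*} [AddCommGroup L] [Module ℂ L] [AddCommGroup M] [Module ℂ M]
    (bL : L →ₗ[ℂ] L →ₗ[ℂ] L) (bM : M →ₗ[ℂ] M →ₗ[ℂ] M) : Prop :=
  ∃ e : L ≃ₗ[ℂ] M, ∀ x y : L, e (bL x y) = bM (e x) (e y)

/-- The nilradical of `(L, bL)` is isomorphic (as an algebra) to `(M, bM)`. -/
def NilradicalIso {L M : Type*} [AddCommGroup L] [Module ℂ L] [AddCommGroup M] [Module ℂ M]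
    (bL : L →ₗ[ℂ] L →ₗ[ℂ] L) (bM : M →ₗ[ℂ] M →ₗ[ℂ] M) : Prop :=
  ∃ I : Submodule ℂ L, IsNilradical bL I ∧
    ∃ f : M →ₗ[ℂ] L, Function.Injective f ∧ LinearMap.range f = I ∧
      ∀ x y : M, f (bM x y) = bL (f x) (f y)

/-- A derivation of the algebra `(L, b)`. -/
def IsDerivation {L : Type*} [AddCommGroup L] [Module ℂ L]
    (b : L →ₗ[ℂ] L →ₗ[ℂ] L) (d : L →ₗ[ℂ] L) : Prop :=
  ∀ x y : L, d (b x y) = b (d x) y + b x (d y)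

/-- The bilinear bracket on `Fin n → ℂ` determined by structure constants `c`. -/
noncomputable def bilin (n : ℕ) (c : Fin n → Fin n → Fin n → ℂ) :
    (Fin n → ℂ) →ₗ[ℂ] (Fin n → ℂ) →ₗ[ℂ] (Fin n → ℂ) :=
  LinearMap.mk₂ ℂ (fun x y k => ∑ i, ∑ j, x i * y j * c i j k)
    (by intro x x' y; funext k; simp [add_mul, Finset.sum_add_distrib])
    (by intro a x y; funext k; simp [Finset.mul_sum, mul_assoc])
    (by intro x y y'; funext k; simp [mul_add, add_mul, Finset.sum_add_distrib])
    (by intro a x y; funext k; simp [Finset.mul_sum, mul_assoc, mul_left_comm])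

/-- The paper's basis vector `e_i` (1-indexed: valid for `1 ≤ i ≤ n`). -/
noncomputable def E (n : ℕ) (i : ℕ) : Fin n → ℂ :=
  if h : 1 ≤ i ∧ i ≤ n then Pi.single (⟨i - 1, by omega⟩ : Fin n) 1 else 0

/-- Structure constants of the null-filiform algebra `NF_n`:
`[e_i, e_1] = e_{i+1}` for `1 ≤ i ≤ n-1` (indices are 0-based). -/
noncomputable def cNF (n : ℕ) : Fin n → Fin n → Fin n → ℂ := fun i j k =>
  if j.val = 0 ∧ k.val = i.val + 1 then 1 else 0

/-- Structure constants of `F_n^1`: `[e_1,e_1] = e_3`, `[e_i,e_1] = e_{i+1}` for `2 ≤ i ≤ n-1`. -/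
noncomputable def cF1 (n : ℕ) : Fin n → Fin n → Fin n → ℂ := fun i j k =>
  if j.val = 0 ∧ ((i.val = 0 ∧ k.val = 2) ∨ (1 ≤ i.val ∧ k.val = i.val + 1)) then 1 else 0

/-- Structure constants of `F_n^2`: `[e_1,e_1] = e_3`, `[e_i,e_1] = e_{i+1}` for `3 ≤ i ≤ n-1`. -/
noncomputable def cF2 (n : ℕ) : Fin n → Fin n → Fin n → ℂ := fun i j k =>
  if j.val = 0 ∧ ((i.val = 0 ∧ k.val = 2) ∨ (2 ≤ i.val ∧ k.val = i.val + 1)) then 1 else 0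

/-- Structure constants of the filiform Lie algebra `n_{n,1}`:
`[e_i,e_1] = -[e_1,e_i] = e_{i+1}` for `2 ≤ i ≤ n-1`. -/
noncomputable def cNn (n : ℕ) : Fin n → Fin n → Fin n → ℂ := fun i j k =>
  (if j.val = 0 ∧ 1 ≤ i.val ∧ k.val = i.val + 1 then 1 else 0)
  - (if i.val = 0 ∧ 1 ≤ j.val ∧ k.val = j.val + 1 then 1 else 0)

/-- Structure constants of the filiform Lie algebra `Q_{2n}` (on `Fin (2*n)`). -/
noncomputable def cQ (n : ℕ) : Fin (2*n) → Fin (2*n) → Fin (2*n) → ℂ := fun i j k =>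
  (if j.val = 0 ∧ 1 ≤ i.val ∧ i.val ≤ 2*n - 3 ∧ k.val = i.val + 1 then 1 else 0)
  - (if i.val = 0 ∧ 1 ≤ j.val ∧ j.val ≤ 2*n - 3 ∧ k.val = j.val + 1 then 1 else 0)
  + (if 1 ≤ i.val ∧ i.val ≤ n - 1 ∧ i.val + j.val = 2*n - 1 ∧ k.val = 2*n - 1
      then (-1 : ℂ)^(i.val + 1) else 0)
  - (if 1 ≤ j.val ∧ j.val ≤ n - 1 ∧ i.val + j.val = 2*n - 1 ∧ k.val = 2*n - 1
      then (-1 : ℂ)^(j.val + 1) else 0)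

/-- Structure constants of `R_{n+1,1}(γ₁,γ₂,γ₃)` (basis `e_1,…,e_n,x`; `x` has 0-based index `n`). -/
noncomputable def cRn (n : ℕ) (g1 g2 g3 : ℂ) : Fin (n+1) → Fin (n+1) → Fin (n+1) → ℂ := fun i j k =>
  (if j.val = 0 ∧ 1 ≤ i.val ∧ i.val ≤ n - 2 ∧ k.val = i.val + 1 then 1 else 0)
  - (if i.val = 0 ∧ 1 ≤ j.val ∧ j.val ≤ n - 2 ∧ k.val = j.val + 1 then 1 else 0)
  + (if i.val = 0 ∧ j.val = n ∧ k.val = 0 then 1 else 0)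
  - (if i.val = n ∧ j.val = 0 ∧ k.val = 0 then 1 else 0)
  + (if i.val = n ∧ j.val = 0 ∧ k.val = n - 1 then g1 else 0)
  + (if 1 ≤ i.val ∧ i.val ≤ n - 2 ∧ j.val = n ∧ k.val = i.val then ((i.val : ℂ) + 1 - n) else 0)
  + (if i.val = n ∧ 1 ≤ j.val ∧ j.val ≤ n - 2 ∧ k.val = j.val then ((n : ℂ) - j.val - 1) else 0)
  + (if i.val = n ∧ j.val = 1 ∧ k.val = n - 1 then g2 else 0)
  + (if i.val = n ∧ j.val = n ∧ k.val = n - 1 then g3 else 0)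

/-- Structure constants of `R_{2n+1,1}(γ₁,γ₂,γ₃)` (basis `e_1,…,e_{2n},x`; `x` has 0-based index `2n`). -/
noncomputable def cRQ (n : ℕ) (g1 g2 g3 : ℂ) : Fin (2*n+1) → Fin (2*n+1) → Fin (2*n+1) → ℂ := fun i j k =>
  (if j.val = 0 ∧ 1 ≤ i.val ∧ i.val ≤ 2*n - 3 ∧ k.val = i.val + 1 then 1 else 0)
  - (if i.val = 0 ∧ 1 ≤ j.val ∧ j.val ≤ 2*n - 3 ∧ k.val = j.val + 1 then 1 else 0)
  + (if 1 ≤ i.val ∧ i.val ≤ n - 1 ∧ i.val + j.val = 2*n - 1 ∧ k.val = 2*n - 1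
      then (-1 : ℂ)^(i.val + 1) else 0)
  - (if 1 ≤ j.val ∧ j.val ≤ n - 1 ∧ i.val + j.val = 2*n - 1 ∧ k.val = 2*n - 1
      then (-1 : ℂ)^(j.val + 1) else 0)
  + (if i.val = 0 ∧ j.val = 2*n ∧ k.val = 0 then 1 else 0)
  - (if i.val = 2*n ∧ j.val = 0 ∧ k.val = 0 then 1 else 0)
  + (if i.val = 2*n ∧ j.val = 0 ∧ k.val = n - 1 then g1 else 0)
  + (if 1 ≤ i.val ∧ i.val ≤ 2*n - 2 ∧ j.val = 2*n ∧ k.val = i.val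
      then ((2*n : ℂ) + 2*((i.val : ℂ) + 1) - 7)/2 else 0)
  - (if i.val = 2*n ∧ 1 ≤ j.val ∧ j.val ≤ 2*n - 2 ∧ k.val = j.val
      then ((2*n : ℂ) + 2*((j.val : ℂ) + 1) - 7)/2 else 0)
  + (if i.val = 2*n ∧ j.val = 1 ∧ k.val = n - 1 then g2 else 0)
  + (if i.val = 2*n ∧ j.val = 2*n ∧ k.val = n - 1 then g3 else 0)

section Codimension

variable {K V : Type*} [Field K] [AddCommGroup V] [Module K V] [FiniteDimensional K V]

theorem Submodule.exists_span_singleton_sup_eq_top (W : Submodule K V)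
    (hW : finrank K V ≤ finrank K W + 1) : ∃ x : V, K ∙ x ⊔ W = ⊤ := by
  by_cases hWtop : W = ⊤
  · exact ⟨0, by simp [hWtop]⟩
  obtain ⟨x, -, hxW⟩ := SetLike.exists_of_lt (lt_top_iff_ne_top.mpr hWtop)
  have hlt : W < K ∙ x ⊔ W :=
    lt_of_le_of_ne le_sup_right fun h =>
      hxW (h ▸ Submodule.mem_sup_left (Submodule.mem_span_singleton_self x))
  refine ⟨x, Submodule.eq_top_of_finrank_eq (le_antisymm (Submodule.finrank_le _) ?_)⟩
  have := Submodule.finrank_lt_finrank_of_lt hlt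
  omega

end Codimension

section LowerCentralSeries

variable {L : Type*} [AddCommGroup L] [Module ℂ L] (b : L →ₗ[ℂ] L →ₗ[ℂ] L)

theorem mem_bracketSpan {S T : Submodule ℂ L} {x y : L} (hx : x ∈ S) (hy : y ∈ T) :
    b x y ∈ bracketSpan b S T :=
  Submodule.subset_span ⟨x, hx, y, hy, rfl⟩

theorem bracketSpan_le {S T U : Submodule ℂ L} (h : ∀ x ∈ S, ∀ y ∈ T, b x y ∈ U) :
    bracketSpan b S T ≤ U :=
  Submodule.span_le.mpr fun _ ⟨x, hx, y, hy, hz⟩ => hz ▸ h x hx y hy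

theorem bracket_mem_lcs_succ {k : ℕ} {x : L} (hx : x ∈ lcs b k) (y : L) :
    b x y ∈ lcs b (k + 1) :=
  mem_bracketSpan b hx Submodule.mem_top

theorem bracket_mem_lcs_add_two (hb : IsLeibniz b) {k : ℕ} {x v : L} (hx : x ∈ lcs b k)
    (hv : v ∈ lcs b 1) : b x v ∈ lcs b (k + 2) := by
  suffices lcs b 1 ≤ (lcs b (k + 2)).comap (b x) from this hv
  refine bracketSpan_le b fun y _ z _ => ?_
  rw [Submodule.mem_comap, hb]
  exact sub_mem (bracket_mem_lcs_succ b (bracket_mem_lcs_succ b hx y) z)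
    (bracket_mem_lcs_succ b (bracket_mem_lcs_succ b hx z) y)

/-- The right-normed power `x^(k+1) = [x^k, x]`; the index is shifted by one, as for `lcs`. -/
def rightPow (x : L) : ℕ → L
  | 0 => x
  | k + 1 => b (rightPow x k) x

theorem rightPow_succ (x : L) (k : ℕ) : rightPow b x (k + 1) = b (rightPow b x k) x := rfl

theorem rightPow_mem_lcs (x : L) (k : ℕ) : rightPow b x k ∈ lcs b k := by
  induction k with
  | zero => exact Submodule.mem_top
  | succ k ih => exact bracket_mem_lcs_succ b ih x

theorem rightPow_eq_zero_of_le {n m : ℕ} (hn : lcs b n = ⊥) (x : L) (hm : n ≤ m) :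
    rightPow b x m = 0 := by
  induction m, hm using Nat.le_induction with
  | base => simpa [hn] using rightPow_mem_lcs b x n
  | succ m _ ih => rw [rightPow_succ, ih, map_zero, LinearMap.zero_apply]

theorem bracket_rightPow_succ_eq_zero (hb : IsLeibniz b) (x y : L) (j : ℕ) :
    b y (rightPow b x (j + 1)) = 0 := by
  induction j generalizing y with
  | zero => rw [rightPow_succ, hb, rightPow, sub_self]
  | succ j ih => rw [rightPow_succ, hb, ih, ih, map_zero, LinearMap.zero_apply, sub_zero]

variable {b}

theorem lcs_le_span_rightPow_sup (hb : IsLeibniz b) {x : L} (hx : ℂ ∙ x ⊔ lcs b 1 = ⊤)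
    (k : ℕ) : lcs b k ≤ ℂ ∙ rightPow b x k ⊔ lcs b (k + 1) := by
  induction k with
  | zero => exact hx.ge
  | succ k ih =>
    refine bracketSpan_le b fun y hy z _ => ?_
    obtain ⟨_, hu, u, hu', rfl⟩ := Submodule.mem_sup.mp (ih hy)
    obtain ⟨a, rfl⟩ := Submodule.mem_span_singleton.mp hu
    obtain ⟨_, hw, w, hw', rfl⟩ := Submodule.mem_sup.mp (hx.ge (Submodule.mem_top (x := z)))
    obtain ⟨c, rfl⟩ := Submodule.mem_span_singleton.mp hw
    have hexpand : b (a • rightPow b x k + u) (c • x + w) = (a * c) • rightPow b x (k + 1)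
        + (a • b (rightPow b x k) w + b u (c • x + w)) := by
      simp only [rightPow_succ, map_add, map_smul, LinearMap.add_apply, LinearMap.smul_apply,
        smul_add, smul_smul]
      module
    rw [hexpand]
    refine add_mem (Submodule.mem_sup_left (Submodule.smul_mem _ _
      (Submodule.mem_span_singleton_self _))) (Submodule.mem_sup_right (add_mem ?_ ?_))
    · exact Submodule.smul_mem _ _ (bracket_mem_lcs_add_two b hb (rightPow_mem_lcs b x k) hw')
    · exact bracket_mem_lcs_succ b hu' _

theorem top_le_span_rightPow_sup (hb : IsLeibniz b) {x : L} (hx : ℂ ∙ x ⊔ lcs b 1 = ⊤)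
    (k : ℕ) : ⊤ ≤ Submodule.span ℂ (rightPow b x '' Set.Iio k) ⊔ lcs b k := by
  induction k with
  | zero => exact le_sup_right
  | succ k ih =>
    have hspan_mono : Submodule.span ℂ (rightPow b x '' Set.Iio k)
        ≤ Submodule.span ℂ (rightPow b x '' Set.Iio (k + 1)) :=
      Submodule.span_mono (Set.image_mono (Set.Iio_subset_Iio k.le_succ))
    have hnew : ℂ ∙ rightPow b x k ≤ Submodule.span ℂ (rightPow b x '' Set.Iio (k + 1)) :=
      Submodule.span_mono (Set.singleton_subset_iff.mpr ⟨k, k.lt_succ_self, rfl⟩)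
    exact ih.trans (sup_le (hspan_mono.trans le_sup_left)
      ((lcs_le_span_rightPow_sup hb hx k).trans (sup_le (hnew.trans le_sup_left) le_sup_right)))

end LowerCentralSeries

section StructureConstants

variable {L : Type*} [AddCommGroup L] [Module ℂ L]

theorem bilin_single_single {n : ℕ} (c : Fin n → Fin n → Fin n → ℂ) (i j : Fin n) :
    bilin n c (Pi.single i 1) (Pi.single j 1) = c i j := by
  funext k
  simp [bilin, Pi.single_apply, ite_mul, mul_ite]

theorem leibnizIso_bilin_of_basis {n : ℕ} (b : L →ₗ[ℂ] L →ₗ[ℂ] L)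
    (c : Fin n → Fin n → Fin n → ℂ) (B : Basis (Fin n) ℂ L)
    (hc : ∀ i j, B.equivFun (b (B i) (B j)) = c i j) : LeibnizIso b (bilin n c) := by
  refine ⟨B.equivFun, fun x y => ?_⟩
  have hext : b.compr₂ (B.equivFun : L →ₗ[ℂ] Fin n → ℂ)
      = (bilin n c).compl₁₂ (B.equivFun : L →ₗ[ℂ] Fin n → ℂ) B.equivFun :=
    B.ext fun i => B.ext fun j => by
      simp [hc, Finsupp.single_eq_pi_single, bilin_single_single]
  exact LinearMap.congr_fun₂ hext x y

theorem Module.Basis.equivFun_rightPow {b : L →ₗ[ℂ] L →ₗ[ℂ] L} {n : ℕ} (hn : lcs b n = ⊥)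
    {x : L} (B : Basis (Fin n) ℂ L) (hB : ∀ i, B i = rightPow b x i) (m : ℕ) :
    B.equivFun (rightPow b x m) = fun k => if k.val = m then 1 else 0 := by
  funext k
  by_cases hm : m < n
  · simp [← hB ⟨m, hm⟩, Fin.ext_iff, eq_comm]
  · rw [rightPow_eq_zero_of_le b hn x (not_lt.mp hm), map_zero, Pi.zero_apply,
      if_neg (by omega)]

end StructureConstants

theorem statement4 (n : ℕ) {L : Type*} [AddCommGroup L] [Module ℂ L] [FiniteDimensional ℂ L]
    (b : L →ₗ[ℂ] L →ₗ[ℂ] L) (hb : IsLeibniz b)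
    (hdim : Module.finrank ℂ L = n)
    (hnull : ∀ i : ℕ, 1 ≤ i → i ≤ n + 1 → Module.finrank ℂ (lcs b (i - 1)) = n + 1 - i) :
    LeibnizIso b (bilin n (cNF n)) := by
  have hcodim : finrank ℂ L ≤ finrank ℂ (lcs b 1) + 1 := by
    rcases Nat.eq_zero_or_pos n with hn | hn
    · omega
    · have : finrank ℂ (lcs b 1) = n - 1 := hnull 2 (by omega) (by omega)
      omega
  have hbot : lcs b n = ⊥ := by
    have := hnull (n + 1) (by omega) le_rfl
    rwa [Nat.add_sub_cancel, Nat.sub_self, Submodule.finrank_eq_zero] at this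
  obtain ⟨x, hx⟩ := (lcs b 1).exists_span_singleton_sup_eq_top hcodim
  have hspan : ⊤ ≤ Submodule.span ℂ (Set.range fun i : Fin n => rightPow b x i) := by
    have h := top_le_span_rightPow_sup hb hx n
    rwa [hbot, sup_bot_eq, ← Fin.range_val, ← Set.range_comp] at h
  let B := basisOfTopLeSpanOfCardEqFinrank _ hspan (by simp [hdim])
  have hB : ∀ i, B i = rightPow b x i := fun i => by simp [B]
  refine leibnizIso_bilin_of_basis b (cNF n) B fun i j => ?_
  rw [hB, hB]
  rcases j with ⟨_ | j, hj⟩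
  · change B.equivFun (b (rightPow b x i) x) = _
    rw [← rightPow_succ, B.equivFun_rightPow hbot hB]
    funext k
    simp [cNF]
  · rw [bracket_rightPow_succ_eq_zero b hb _ _ j, map_zero]
    funext k
    simp [cNF]
end

section
/- Let n ≥ 4. There is no (n+2)-dimensional solvable non-Lie complex Leibniz algebra whose nilradical is isomorphic to n_{n,1}. -/
open Finset Module

/-!
Let `N ≅ n_{n,1}` be the nilradical. The squares `[x, x]` span a nilpotent ideal, so they lie in
`N`; as right annihilators they lie in the centre `ℂ eₙ` of `N`, and since `L` is not Lie this
forces `[L, eₙ] = 0`. Right multiplication `R_z` by `z ∈ L` restricts to a derivation of `N`. It is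
triangular in the basis `eᵢ`: if `α(z)` and `β(z)` are its diagonal entries at `e₁` and `e₂`, the
entry at `eᵢ` is `β(z) + (i - 2) α(z)` for `i ≥ 2`. Writing `eₙ = [eₙ₋₁, e₁]`, the identity
`[L, eₙ] = 0` propagates to `[eₙ, L] = 0`, so the entry at `eₙ` vanishes: `β = -(n - 2) α`.
Diagonal entries of triangular maps multiply under composition, so `α` kills the commutators
`R_{[z, z']} = R_{z'} R_z - R_z R_{z'}`, hence all of `[L, L] + N`, which is proper by solvability.
So there is `w ∉ N` with `α(w) = 0` and `[L, L] ⊆ N + ℂ w`. Then `α(w) = β(w) = 0`, `R_w` strictly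
lowers the filtration of `N`, and `N + ℂ w` is a nilpotent ideal strictly larger than `N`.

In the code the paper's `n` becomes `n + 4` and `eᵢ` is `Pi.single (i - 1) 1`.
-/

section Filtration

-- `span {e_{k+1}, …, e_N}`; for `n_{N,1}` and `k ≥ 2` it is the `k`-th term of its lower central
-- series.
def vanishingBelow (N k : ℕ) : Submodule ℂ (Fin N → ℂ) where
  carrier := {x | ∀ j : Fin N, (j : ℕ) < k → x j = 0}
  add_mem' hx hy j hj := by simp [hx j hj, hy j hj]
  zero_mem' _ _ := rfl
  smul_mem' c x hx j hj := by simp [hx j hj]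

variable {N : ℕ}

lemma mem_vanishingBelow_zero (x : Fin N → ℂ) : x ∈ vanishingBelow N 0 :=
  fun _ h => absurd h (Nat.not_lt_zero _)

lemma vanishingBelow_anti {k l : ℕ} (h : k ≤ l) : vanishingBelow N l ≤ vanishingBelow N k :=
  fun _ hx j hj => hx j (by omega)

lemma vanishingBelow_eq_bot {k : ℕ} (h : N ≤ k) : vanishingBelow N k = ⊥ :=
  eq_bot_iff.mpr fun x hx => funext fun j => hx j (by omega)

lemma single_mem_vanishingBelow {k : ℕ} {j : Fin N} (h : k ≤ j) (c : ℂ) :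
    Pi.single j c ∈ vanishingBelow N k := fun i hi => by
  rw [Pi.single_apply, if_neg (by rintro rfl; omega)]

lemma sub_single_mem_vanishingBelow_succ {j : Fin N} {x : Fin N → ℂ}
    (hx : x ∈ vanishingBelow N j) : x - Pi.single j (x j) ∈ vanishingBelow N (j + 1) := by
  intro i hi
  rcases Nat.lt_succ_iff_lt_or_eq.mp hi with hi | hi
  · simp [hx i hi, Fin.ext_iff, hi.ne]
  · simp [Fin.ext hi]

lemma map_mem_of_forall_single_mem {M : Type*} [AddCommGroup M] [Module ℂ M]
    (φ : (Fin N → ℂ) →ₗ[ℂ] M) (W : Submodule ℂ M) {k : ℕ}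
    (h : ∀ j : Fin N, k ≤ j → φ (Pi.single j 1) ∈ W) {x : Fin N → ℂ}
    (hx : x ∈ vanishingBelow N k) : φ x ∈ W := by
  rw [← Finset.univ_sum_single x, map_sum]
  refine W.sum_mem fun j _ => ?_
  by_cases hj : (j : ℕ) < k
  · simp [hx j hj]
  · rw [← mul_one (x j), ← smul_eq_mul, Pi.single_smul', map_smul]
    exact W.smul_mem _ (h j (by omega))

end Filtration

section Model

variable {n : ℕ}

lemma cNn_bracket_apply (x y : Fin n → ℂ) (k : Fin n) :
    bilin n (cNn n) x y k = ∑ i, ∑ j, x i * y j * cNn n i j k := rfl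

lemma cNn_apply_succ (i j : Fin (n + 1)) (k : Fin n) :
    cNn (n + 1) i j k.succ =
      (if i = k.castSucc ∧ j = 0 then 1 else 0) - (if i = 0 ∧ j = k.castSucc then 1 else 0) := by
  simp only [cNn, Fin.ext_iff, Fin.val_succ, Fin.val_castSucc, Fin.val_zero]
  split_ifs <;> first | rfl | omega | simp_all

lemma cNn_bracket_apply_succ (x y : Fin (n + 1) → ℂ) (i : Fin n) :
    bilin (n + 1) (cNn (n + 1)) x y i.succ = y 0 * x i.castSucc - x 0 * y i.castSucc := by
  simp [cNn_bracket_apply, cNn_apply_succ, mul_sub, ite_and, Finset.sum_sub_distrib]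
  ring

lemma cNn_bracket_apply_zero (x y : Fin (n + 1) → ℂ) :
    bilin (n + 1) (cNn (n + 1)) x y 0 = 0 := by
  simp [cNn_bracket_apply, cNn]

lemma cNn_bracket_swap (x y : Fin (n + 1) → ℂ) :
    bilin (n + 1) (cNn (n + 1)) y x = -bilin (n + 1) (cNn (n + 1)) x y := by
  funext k
  induction k using Fin.cases with
  | zero => simp [cNn_bracket_apply_zero]
  | succ i => simp only [cNn_bracket_apply_succ, Pi.neg_apply]; ring

lemma cNn_bracket_mem_vanishingBelow_succ {k : ℕ} {x : Fin (n + 1) → ℂ}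
    (hx : x ∈ vanishingBelow (n + 1) k) (y : Fin (n + 1) → ℂ) :
    bilin (n + 1) (cNn (n + 1)) x y ∈ vanishingBelow (n + 1) (k + 1) := by
  intro j hj
  induction j using Fin.cases with
  | zero => exact cNn_bracket_apply_zero x y
  | succ i =>
    have hi : (i : ℕ) < k := by simpa using hj
    rw [cNn_bracket_apply_succ, hx 0 (by simp; omega), hx i.castSucc (by simpa using hi)]
    ring

lemma cNn_single_bracket {i : Fin (n + 1)} (hi : i ≠ 0) (y : Fin (n + 2) → ℂ) :
    bilin (n + 2) (cNn (n + 2)) (Pi.single i.castSucc 1) y = y 0 • Pi.single i.succ 1 := by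
  funext k
  induction k using Fin.cases with
  | zero => simp [cNn_bracket_apply_zero]
  | succ j =>
    have : (0 : Fin (n + 2)) ≠ i.castSucc := by
      rw [Ne, eq_comm, ← Fin.castSucc_zero, Fin.castSucc_inj]; exact hi
    simp [cNn_bracket_apply_succ, Pi.single_apply, this, Fin.succ_inj]

lemma cNn_eq_smul_single_last {x : Fin (n + 3) → ℂ}
    (hx : ∀ y, bilin (n + 3) (cNn (n + 3)) y x = 0) :
    x = x (Fin.last _) • Pi.single (Fin.last _) 1 := by
  funext k
  induction k using Fin.lastCases with
  | last => simp
  | cast j =>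
    suffices x j.castSucc = 0 by simp [this, Fin.castSucc_ne_last]
    by_cases hj : j = 0
    · have h := congrFun (hx (Pi.single 1 1)) 2
      rw [show (2 : Fin (n + 3)) = Fin.succ 1 from rfl, cNn_bracket_apply_succ] at h
      simpa [hj] using h
    · have h := congrFun (hx (Pi.single 0 1)) j.succ
      rw [cNn_bracket_apply_succ] at h
      simpa [Pi.single_apply, Fin.ext_iff, hj] using h

end Model

section Derivation

variable {n : ℕ}

noncomputable def derivWeight (d : Module.End ℂ (Fin (n + 2) → ℂ)) (k : ℕ) : ℂ :=
  d (Pi.single 1 1) 1 + ((k : ℂ) - 1) * d (Pi.single 0 1) 0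

lemma IsDerivation.apply_single_one_zero {d : Module.End ℂ (Fin (n + 4) → ℂ)}
    (hd : IsDerivation (bilin (n + 4) (cNn (n + 4))) d) : d (Pi.single 1 1) 0 = 0 := by
  have h12 : bilin (n + 4) (cNn (n + 4)) (Pi.single 1 1) (Pi.single 2 1) = 0 := by
    rw [show (1 : Fin (n + 4)) = Fin.castSucc 1 from rfl, cNn_single_bracket (by simp)]
    simp [Fin.ext_iff, Nat.mod_eq_of_lt]
  have h := congrFun (hd (Pi.single 1 1) (Pi.single 2 1)) (Fin.succ 2)
  simp only [h12, map_zero, Pi.add_apply, cNn_bracket_apply_succ] at h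
  have h2 : Fin.castSucc (2 : Fin (n + 3)) = 2 := rfl
  simpa [h2, Fin.ext_iff, Nat.mod_eq_of_lt] using h

lemma IsDerivation.apply_single_sub_mem {d : Module.End ℂ (Fin (n + 4) → ℂ)}
    (hd : IsDerivation (bilin (n + 4) (cNn (n + 4))) d) {j : Fin (n + 4)} (hj : j ≠ 0) :
    d (Pi.single j 1) - derivWeight d j • Pi.single j 1 ∈ vanishingBelow (n + 4) (j + 1) := by
  induction j using Fin.induction with
  | zero => exact absurd rfl hj
  | succ i ih =>
    rcases eq_or_ne i 0 with rfl | hi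
    · intro k hk
      induction k using Fin.cases with
      | zero => simp [hd.apply_single_one_zero]
      | succ k =>
        obtain rfl : k = 0 := Fin.ext (by simp at hk; omega)
        simp [derivWeight]
    · have hci : i.castSucc ≠ 0 := by rwa [Ne, ← Fin.castSucc_zero, Fin.castSucc_inj]
      set e : Fin (n + 4) → Fin (n + 4) → ℂ := fun k => Pi.single k 1
      have hrec : e i.succ = bilin (n + 4) (cNn (n + 4)) (e i.castSucc) (e 0) := by
        simp [e, cNn_single_bracket hi]
      have hweight : derivWeight d i.succ = derivWeight d i.castSucc + d (e 0) 0 := by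
        simp only [derivWeight, Fin.val_succ, Fin.val_castSucc, e]
        push_cast
        ring
      have key : d (e i.succ) - derivWeight d i.succ • e i.succ =
          bilin (n + 4) (cNn (n + 4)) (d (e i.castSucc) - derivWeight d i.castSucc • e i.castSucc)
            (e 0) := by
        rw [map_sub, map_smul, LinearMap.sub_apply, LinearMap.smul_apply, ← hrec, hweight,
          hrec, hd, cNn_single_bracket hi, ← hrec]
        simp only [add_smul]
        abel
      rw [key, Fin.val_succ]
      exact cNn_bracket_mem_vanishingBelow_succ (ih hci) _

lemma IsDerivation.map_mem_vanishingBelow {d : Module.End ℂ (Fin (n + 4) → ℂ)}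
    (hd : IsDerivation (bilin (n + 4) (cNn (n + 4))) d) {k : ℕ} (hk : 1 ≤ k)
    {x : Fin (n + 4) → ℂ} (hx : x ∈ vanishingBelow (n + 4) k) : d x ∈ vanishingBelow (n + 4) k := by
  refine map_mem_of_forall_single_mem d _ (fun j hj => ?_) hx
  have hj0 : j ≠ 0 := by rintro rfl; simp at hj; omega
  rw [← sub_add_cancel (d _) (derivWeight d j • Pi.single j 1)]
  exact add_mem (vanishingBelow_anti (by omega) (hd.apply_single_sub_mem hj0))
    ((vanishingBelow _ _).smul_mem _ (single_mem_vanishingBelow hj _))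

lemma IsDerivation.apply_apply_single_zero {d : Module.End ℂ (Fin (n + 4) → ℂ)}
    (hd : IsDerivation (bilin (n + 4) (cNn (n + 4))) d) (d' : Module.End ℂ (Fin (n + 4) → ℂ)) :
    d (d' (Pi.single 0 1)) 0 = d (Pi.single 0 1) 0 * d' (Pi.single 0 1) 0 := by
  set y := d' (Pi.single 0 1)
  have hr : y - Pi.single 0 (y 0) ∈ vanishingBelow (n + 4) 1 :=
    sub_single_mem_vanishingBelow_succ (j := 0) (mem_vanishingBelow_zero y)
  have := hd.map_mem_vanishingBelow le_rfl hr 0 Nat.one_pos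
  rw [map_sub, Pi.sub_apply, sub_eq_zero, ← mul_one (y 0), ← smul_eq_mul, Pi.single_smul',
    map_smul] at this
  rw [this, Pi.smul_apply, smul_eq_mul, mul_comm]

lemma IsDerivation.map_mem_vanishingBelow_succ {d : Module.End ℂ (Fin (n + 4) → ℂ)}
    (hd : IsDerivation (bilin (n + 4) (cNn (n + 4))) d) (h0 : d (Pi.single 0 1) 0 = 0)
    (h1 : d (Pi.single 1 1) 1 = 0) {k : ℕ} {x : Fin (n + 4) → ℂ}
    (hx : x ∈ vanishingBelow (n + 4) k) : d x ∈ vanishingBelow (n + 4) (k + 1) := by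
  refine map_mem_of_forall_single_mem d _ (fun j hj => ?_) hx
  rcases eq_or_ne j 0 with rfl | hj0
  · intro i hi
    obtain rfl : i = 0 := Fin.ext (by simp only [Fin.val_zero] at hj ⊢; omega)
    exact h0
  have := hd.apply_single_sub_mem hj0
  rw [derivWeight, h0, h1, mul_zero, add_zero, zero_smul, sub_zero] at this
  exact vanishingBelow_anti (by omega) this

end Derivation

section Leibniz

variable {L : Type*} [AddCommGroup L] [Module ℂ L] {b : L →ₗ[ℂ] L →ₗ[ℂ] L}

lemma IsLeibniz.bracket_bracket_self (hb : IsLeibniz b) (y x : L) : b y (b x x) = 0 := by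
  rw [hb y x x, sub_self]

lemma IsLeibniz.bracket_bracket_left (hb : IsLeibniz b) (x y z : L) :
    b (b x y) z = b x (b y z) + b (b x z) y := by
  rw [hb x y z, sub_add_cancel]

def squareSpan (b : L →ₗ[ℂ] L →ₗ[ℂ] L) : Submodule ℂ L :=
  Submodule.span ℂ (Set.range fun x => b x x)

lemma add_swap_mem_squareSpan (x y : L) : b x y + b y x ∈ squareSpan b := by
  have h : b x y + b y x = b (x + y) (x + y) - b x x - b y y := by
    simp only [map_add, LinearMap.add_apply]; abel
  rw [h]
  exact sub_mem (sub_mem (Submodule.subset_span ⟨_, rfl⟩) (Submodule.subset_span ⟨_, rfl⟩))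
    (Submodule.subset_span ⟨_, rfl⟩)

lemma IsLeibniz.bracket_eq_zero_of_mem_squareSpan (hb : IsLeibniz b) (y : L) {a : L}
    (ha : a ∈ squareSpan b) : b y a = 0 := by
  have : squareSpan b ≤ LinearMap.ker (b y) :=
    Submodule.span_le.mpr <| Set.range_subset_iff.mpr (hb.bracket_bracket_self y)
  exact this ha

lemma IsLeibniz.isNilpotentIdeal_squareSpan (hb : IsLeibniz b) :
    IsNilpotentIdeal b (squareSpan b) := by
  refine ⟨fun a ha y => ⟨?_, ?_⟩, 1, eq_bot_iff.mpr ?_⟩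
  · have : squareSpan b ≤ (squareSpan b).comap (b.flip y) := by
      refine Submodule.span_le.mpr <| Set.range_subset_iff.mpr fun x => ?_
      change b (b x x) y ∈ squareSpan b
      rw [hb.bracket_bracket_left]
      exact add_swap_mem_squareSpan x (b x y)
    exact this ha
  · rw [hb.bracket_eq_zero_of_mem_squareSpan y ha]
    exact zero_mem _
  · refine Submodule.span_le.mpr ?_
    rintro _ ⟨x, -, y, hy, rfl⟩
    simp [hb.bracket_eq_zero_of_mem_squareSpan x hy]

lemma IsLeibniz.bracket_add_swap_eq_zero (hb : IsLeibniz b) {N : Submodule ℂ L}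
    (hN : IsIdeal b N) (hanti : ∀ u ∈ N, ∀ v ∈ N, b u v + b v u = 0)
    (hpol : ∀ x y, ∀ v ∈ N, b (b x y + b y x) v = 0) {u v : L} (hu : u ∈ N) (hv : v ∈ N)
    (x : L) : b (b u v) x + b x (b u v) = 0 := by
  have h := hanti u hu _ (hN v hv x).1
  have hu' := hpol x u v hv
  have hv' := hpol x v u hu
  simp only [map_add, LinearMap.add_apply] at hu' hv'
  rw [hb.bracket_bracket_left, hb x u v]
  linear_combination (norm := abel) h + hu' - hv'

lemma bracketSpan_sup_le {D I : Submodule ℂ L} (hI : IsIdeal b I) :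
    bracketSpan b (D ⊔ I) (D ⊔ I) ≤ bracketSpan b D D ⊔ I := by
  refine Submodule.span_le.mpr ?_
  rintro _ ⟨x, hx, y, hy, rfl⟩
  obtain ⟨d, hd, u, hu, rfl⟩ := Submodule.mem_sup.mp hx
  obtain ⟨d', hd', u', hu', rfl⟩ := Submodule.mem_sup.mp hy
  simp only [map_add, LinearMap.add_apply]
  exact add_mem (add_mem (Submodule.mem_sup_left (Submodule.subset_span ⟨d, hd, d', hd', rfl⟩))
    (Submodule.mem_sup_right (hI u hu d').1)) (Submodule.mem_sup_right
      (add_mem (hI u' hu' d).2 (hI u hu u').1))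

lemma IsSolvableAlg.eq_top_of_bracketSpan_sup_eq_top (hsolv : IsSolvableAlg b)
    {I : Submodule ℂ L} (hI : IsIdeal b I) (h : bracketSpan b ⊤ ⊤ ⊔ I = ⊤) : I = ⊤ := by
  have hder : ∀ s, derSeries b s ⊔ I = ⊤ := by
    intro s
    induction s with
    | zero => exact top_sup_eq _
    | succ s ih =>
      refine eq_top_iff.mpr (h ▸ sup_le ?_ le_sup_right)
      change bracketSpan b ⊤ ⊤ ≤ bracketSpan b (derSeries b s) (derSeries b s) ⊔ I
      simpa [ih] using bracketSpan_sup_le (D := derSeries b s) hI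
  obtain ⟨s, hs⟩ := hsolv
  simpa [hs] using hder s

lemma IsLeibniz.bracket_eq_zero_of_squareSpan_le (hb : IsLeibniz b) {e : L}
    (hsq : squareSpan b ≤ ℂ ∙ e) (hnonlie : ∃ x, b x x ≠ 0) (y : L) : b y e = 0 := by
  obtain ⟨x, hx⟩ := hnonlie
  obtain ⟨c, hc : c • e = b x x⟩ :=
    Submodule.mem_span_singleton.mp (hsq (Submodule.subset_span ⟨x, rfl⟩))
  have h := hb.bracket_bracket_self y x
  rw [← hc, map_smul, smul_eq_zero] at h
  exact h.resolve_left (by rintro rfl; exact hx (by simpa using hc.symm))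

end Leibniz

section Embedding

variable {L M : Type*} [AddCommGroup L] [Module ℂ L] [AddCommGroup M] [Module ℂ M]
  {b : L →ₗ[ℂ] L →ₗ[ℂ] L} {bM : M →ₗ[ℂ] M →ₗ[ℂ] M} {f : M →ₗ[ℂ] L} {g : L →ₗ[ℂ] M}

-- `g` is a linear retraction of `f`; it only serves to read elements of the ideal `range f` in `M`.
structure IsIdealEmbedding (b : L →ₗ[ℂ] L →ₗ[ℂ] L) (bM : M →ₗ[ℂ] M →ₗ[ℂ] M)
    (f : M →ₗ[ℂ] L) (g : L →ₗ[ℂ] M) : Prop where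
  leftInverse : g ∘ₗ f = LinearMap.id
  isIdeal : IsIdeal b (LinearMap.range f)
  map_bracket : ∀ x y, f (bM x y) = b (f x) (f y)

noncomputable def restrictedRightMul (b : L →ₗ[ℂ] L →ₗ[ℂ] L) (f : M →ₗ[ℂ] L) (g : L →ₗ[ℂ] M) :
    L →ₗ[ℂ] Module.End ℂ M :=
  (b.flip.compl₂ f).compr₂ g

lemma restrictedRightMul_apply (z : L) (m : M) :
    restrictedRightMul b f g z m = g (b (f m) z) := rfl

lemma IsIdealEmbedding.injective (hf : IsIdealEmbedding b bM f g) : Function.Injective f :=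
  Function.LeftInverse.injective (g := g) fun m => congrArg (· m) hf.leftInverse

lemma IsIdealEmbedding.apply_restrictedRightMul (hf : IsIdealEmbedding b bM f g) (z : L) (m : M) :
    f (restrictedRightMul b f g z m) = b (f m) z := by
  obtain ⟨m', hm'⟩ := hf.isIdeal _ (LinearMap.mem_range_self f m) z |>.1
  rw [restrictedRightMul_apply, ← hm', ← LinearMap.comp_apply g f, hf.leftInverse,
    LinearMap.id_apply]

lemma IsIdealEmbedding.isDerivation_restrictedRightMul (hf : IsIdealEmbedding b bM f g)
    (hb : IsLeibniz b) (z : L) : IsDerivation bM (restrictedRightMul b f g z) := by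
  intro x y
  apply hf.injective
  simp only [map_add, hf.apply_restrictedRightMul, hf.map_bracket]
  rw [hb.bracket_bracket_left, add_comm]

lemma IsIdealEmbedding.restrictedRightMul_bracket (hf : IsIdealEmbedding b bM f g)
    (hb : IsLeibniz b) (z z' : L) (m : M) :
    restrictedRightMul b f g (b z z') m =
      restrictedRightMul b f g z' (restrictedRightMul b f g z m) -
        restrictedRightMul b f g z (restrictedRightMul b f g z' m) := by
  apply hf.injective
  simp only [map_sub, hf.apply_restrictedRightMul]
  exact hb (f m) z z'

lemma IsIdealEmbedding.restrictedRightMul_self (hf : IsIdealEmbedding b bM f g) (m₀ m : M) :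
    restrictedRightMul b f g (f m₀) m = bM m m₀ :=
  hf.injective (by rw [hf.apply_restrictedRightMul, hf.map_bracket])

end Embedding

lemma Submodule.exists_notMem_le_sup_span {K V : Type*} [DivisionRing K] [AddCommGroup V]
    [Module K V] [FiniteDimensional K V] {N Λ W : Submodule K V} (hNΛ : N ≤ Λ) (hΛW : Λ ≤ W)
    (hΛ : finrank K Λ ≤ finrank K N + 1) (hW : finrank K N < finrank K W) :
    ∃ w ∈ W, w ∉ N ∧ Λ ≤ N ⊔ K ∙ w := by
  rcases hNΛ.lt_or_eq with hlt | rfl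
  · obtain ⟨w, hwΛ, hwN⟩ := SetLike.exists_of_lt hlt
    have hlt' : N < N ⊔ K ∙ w :=
      lt_of_le_of_ne le_sup_left fun h => hwN (h ▸ mem_sup_right (mem_span_singleton_self w))
    have := finrank_lt_finrank_of_lt hlt'
    refine ⟨w, hΛW hwΛ, hwN, (eq_of_le_of_finrank_le ?_ ?_).ge⟩
    · exact sup_le hNΛ ((span_singleton_le_iff_mem w Λ).mpr hwΛ)
    · omega
  · obtain ⟨w, hwW, hwN⟩ := SetLike.exists_of_lt (lt_of_le_of_ne hΛW fun h => (h ▸ hW).false)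
    exact ⟨w, hwW, hwN, le_sup_left⟩

section NilradicalFiliform

variable {n : ℕ} {L : Type*} [AddCommGroup L] [Module ℂ L] {b : L →ₗ[ℂ] L →ₗ[ℂ] L}
  {f : (Fin (n + 4) → ℂ) →ₗ[ℂ] L} {g : L →ₗ[ℂ] Fin (n + 4) → ℂ}

lemma squareSpan_le_span_single_last (hb : IsLeibniz b)
    (hf : IsIdealEmbedding b (bilin (n + 4) (cNn (n + 4))) f g)
    (hmax : ∀ J, IsNilpotentIdeal b J → J ≤ LinearMap.range f) :
    squareSpan b ≤ ℂ ∙ f (Pi.single (Fin.last _) 1) := by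
  refine Submodule.span_le.mpr <| Set.range_subset_iff.mpr fun x => ?_
  obtain ⟨m, hm : f m = b x x⟩ :=
    hmax _ hb.isNilpotentIdeal_squareSpan (Submodule.subset_span ⟨x, rfl⟩)
  have hcentral : ∀ y, bilin (n + 4) (cNn (n + 4)) y m = 0 := fun y =>
    hf.injective (by rw [hf.map_bracket, hm, hb.bracket_bracket_self, map_zero])
  rw [SetLike.mem_coe, ← hm, cNn_eq_smul_single_last hcentral, map_smul]
  exact Submodule.smul_mem _ _ (Submodule.mem_span_singleton_self _)

lemma bracket_single_last_left_eq_zero (hb : IsLeibniz b)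
    (hf : IsIdealEmbedding b (bilin (n + 4) (cNn (n + 4))) f g)
    (hsq : squareSpan b ≤ ℂ ∙ f (Pi.single (Fin.last _) 1))
    (hright : ∀ y, b y (f (Pi.single (Fin.last _) 1)) = 0) (x : L) :
    b (f (Pi.single (Fin.last _) 1)) x = 0 := by
  have hanti : ∀ u ∈ LinearMap.range f, ∀ v ∈ LinearMap.range f, b u v + b v u = 0 := by
    rintro _ ⟨m, rfl⟩ _ ⟨m', rfl⟩
    rw [← hf.map_bracket, ← hf.map_bracket, ← map_add, cNn_bracket_swap, neg_add_cancel, map_zero]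
  have hpol : ∀ x y, ∀ v ∈ LinearMap.range f, b (b x y + b y x) v = 0 := by
    intro x y v hv
    obtain ⟨c, hc⟩ := Submodule.mem_span_singleton.mp (hsq (add_swap_mem_squareSpan x y))
    rw [← hc, map_smul, LinearMap.smul_apply, eq_neg_of_add_eq_zero_left (hanti _ ⟨_, rfl⟩ v hv),
      hright, neg_zero, smul_zero]
  have hlast : f (Pi.single (Fin.last _) 1) =
      b (f (Pi.single (Fin.last (n + 2)).castSucc 1)) (f (Pi.single 0 1)) := by
    rw [← hf.map_bracket, cNn_single_bracket (Fin.last_pos.ne'), Fin.succ_last]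
    simp
  have := hb.bracket_add_swap_eq_zero hf.isIdeal hanti hpol
    (LinearMap.mem_range_self f (Pi.single (Fin.last (n + 2)).castSucc 1))
    (LinearMap.mem_range_self f (Pi.single 0 1)) x
  rwa [← hlast, hright, add_zero] at this

lemma derivWeight_restrictedRightMul_eq_zero
    (hf : IsIdealEmbedding b (bilin (n + 4) (cNn (n + 4))) f g) (hb : IsLeibniz b)
    (hleft : ∀ x, b (f (Pi.single (Fin.last _) 1)) x = 0) (x : L) :
    derivWeight (restrictedRightMul b f g x) (n + 3) = 0 := by
  have h := (hf.isDerivation_restrictedRightMul hb x).apply_single_sub_mem (Fin.last_pos.ne')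
  have hzero : restrictedRightMul b f g x (Pi.single (Fin.last _) 1) = 0 :=
    hf.injective (by rw [hf.apply_restrictedRightMul, hleft, map_zero])
  rw [hzero, zero_sub, Fin.val_last, vanishingBelow_eq_bot le_rfl, Submodule.mem_bot,
    neg_eq_zero] at h
  simpa using congrFun h (Fin.last _)

lemma restrictedRightMul_bracket_apply_single_zero
    (hf : IsIdealEmbedding b (bilin (n + 4) (cNn (n + 4))) f g) (hb : IsLeibniz b) (z z' : L) :
    restrictedRightMul b f g (b z z') (Pi.single 0 1) 0 = 0 := by
  rw [hf.restrictedRightMul_bracket hb, Pi.sub_apply,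
    (hf.isDerivation_restrictedRightMul hb z').apply_apply_single_zero,
    (hf.isDerivation_restrictedRightMul hb z).apply_apply_single_zero, mul_comm, sub_self]

lemma restrictedRightMul_self_apply_single_zero
    (hf : IsIdealEmbedding b (bilin (n + 4) (cNn (n + 4))) f g) (m : Fin (n + 4) → ℂ) :
    restrictedRightMul b f g (f m) (Pi.single 0 1) 0 = 0 := by
  rw [hf.restrictedRightMul_self, cNn_bracket_apply_zero]

lemma bracket_mem_map_vanishingBelow_succ (hb : IsLeibniz b)
    (hf : IsIdealEmbedding b (bilin (n + 4) (cNn (n + 4))) f g) {w : L}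
    (h0 : restrictedRightMul b f g w (Pi.single 0 1) 0 = 0)
    (h1 : restrictedRightMul b f g w (Pi.single 1 1) 1 = 0) {k : ℕ} {x : Fin (n + 4) → ℂ}
    (hx : x ∈ vanishingBelow (n + 4) k) {y : L} (hy : y ∈ LinearMap.range f ⊔ ℂ ∙ w) :
    b (f x) y ∈ (vanishingBelow (n + 4) (k + 1)).map f := by
  obtain ⟨_, ⟨m, rfl⟩, _, hv, rfl⟩ := Submodule.mem_sup.mp hy
  obtain ⟨t, rfl⟩ := Submodule.mem_span_singleton.mp hv
  rw [map_add, map_smul, ← hf.map_bracket, ← hf.apply_restrictedRightMul, ← map_smul, ← map_add]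
  exact Submodule.mem_map_of_mem (add_mem (cNn_bracket_mem_vanishingBelow_succ hx m)
    ((vanishingBelow _ _).smul_mem t
      ((hf.isDerivation_restrictedRightMul hb w).map_mem_vanishingBelow_succ h0 h1 hx)))

lemma bracketSpan_le_map_vanishingBelow_one (hb : IsLeibniz b)
    (hf : IsIdealEmbedding b (bilin (n + 4) (cNn (n + 4))) f g)
    (hsq : squareSpan b ≤ ℂ ∙ f (Pi.single (Fin.last _) 1)) {w : L}
    (h0 : restrictedRightMul b f g w (Pi.single 0 1) 0 = 0)
    (h1 : restrictedRightMul b f g w (Pi.single 1 1) 1 = 0) :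
    bracketSpan b (LinearMap.range f ⊔ ℂ ∙ w) (LinearMap.range f ⊔ ℂ ∙ w) ≤
      (vanishingBelow (n + 4) 1).map f := by
  have hsqV : squareSpan b ≤ (vanishingBelow (n + 4) 1).map f :=
    hsq.trans <| (Submodule.span_singleton_le_iff_mem _ _).mpr
      ⟨_, single_mem_vanishingBelow (by simp) 1, rfl⟩
  have hN : ∀ m, ∀ y ∈ LinearMap.range f ⊔ ℂ ∙ w, b (f m) y ∈ (vanishingBelow (n + 4) 1).map f :=
    fun m _ => bracket_mem_map_vanishingBelow_succ hb hf h0 h1 (mem_vanishingBelow_zero m)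
  refine Submodule.span_le.mpr ?_
  rintro _ ⟨x, hx, y, hy, rfl⟩
  obtain ⟨_, ⟨m, rfl⟩, _, hv, rfl⟩ := Submodule.mem_sup.mp hx
  obtain ⟨t, rfl⟩ := Submodule.mem_span_singleton.mp hv
  obtain ⟨_, ⟨m', rfl⟩, _, hv', rfl⟩ := Submodule.mem_sup.mp hy
  obtain ⟨t', rfl⟩ := Submodule.mem_span_singleton.mp hv'
  have hwm' : b w (f m') ∈ (vanishingBelow (n + 4) 1).map f := by
    rw [← add_sub_cancel_right (b w (f m')) (b (f m') w)]
    exact sub_mem (hsqV (add_swap_mem_squareSpan _ _))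
      (hN m' w (Submodule.mem_sup_right (Submodule.mem_span_singleton_self w)))
  rw [map_add b, map_smul b, LinearMap.add_apply, LinearMap.smul_apply]
  refine add_mem (hN m _ hy) (Submodule.smul_mem _ t ?_)
  rw [map_add, map_smul]
  exact add_mem hwm' (Submodule.smul_mem _ t' (hsqV (Submodule.subset_span ⟨w, rfl⟩)))

lemma isNilpotentIdeal_range_sup_span (hb : IsLeibniz b)
    (hf : IsIdealEmbedding b (bilin (n + 4) (cNn (n + 4))) f g)
    (hsq : squareSpan b ≤ ℂ ∙ f (Pi.single (Fin.last _) 1)) {w : L}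
    (h0 : restrictedRightMul b f g w (Pi.single 0 1) 0 = 0)
    (h1 : restrictedRightMul b f g w (Pi.single 1 1) 1 = 0)
    (hLL : bracketSpan b ⊤ ⊤ ≤ LinearMap.range f ⊔ ℂ ∙ w) :
    IsNilpotentIdeal b (LinearMap.range f ⊔ ℂ ∙ w) := by
  have hlcs : ∀ k, idealLCS b (LinearMap.range f ⊔ ℂ ∙ w) (k + 1) ≤
      (vanishingBelow (n + 4) (k + 1)).map f := by
    intro k
    induction k with
    | zero => exact bracketSpan_le_map_vanishingBelow_one hb hf hsq h0 h1
    | succ k ih =>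
      refine Submodule.span_le.mpr ?_
      rintro _ ⟨_, hx, y, hy, rfl⟩
      obtain ⟨m, hm, rfl⟩ := ih hx
      exact bracket_mem_map_vanishingBelow_succ hb hf h0 h1 hm hy
  refine ⟨fun a _ y => ⟨hLL (Submodule.subset_span ⟨a, trivial, y, trivial, rfl⟩),
    hLL (Submodule.subset_span ⟨y, trivial, a, trivial, rfl⟩)⟩, n + 4, eq_bot_iff.mpr ?_⟩
  simpa [vanishingBelow_eq_bot] using hlcs (n + 3)

lemma exists_notMem_range_bracketSpan_le_sup [FiniteDimensional ℂ L] (hb : IsLeibniz b)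
    (hf : IsIdealEmbedding b (bilin (n + 4) (cNn (n + 4))) f g) (hsolv : IsSolvableAlg b)
    (hdim : finrank ℂ L = n + 6) :
    ∃ w, restrictedRightMul b f g w (Pi.single 0 1) 0 = 0 ∧ w ∉ LinearMap.range f ∧
      bracketSpan b ⊤ ⊤ ≤ LinearMap.range f ⊔ ℂ ∙ w := by
  let α : L →ₗ[ℂ] ℂ := LinearMap.proj 0 ∘ₗ (restrictedRightMul b f g).flip (Pi.single 0 1)
  have hΛα : bracketSpan b ⊤ ⊤ ⊔ LinearMap.range f ≤ LinearMap.ker α := by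
    refine sup_le (Submodule.span_le.mpr ?_) ?_
    · rintro _ ⟨z, -, z', -, rfl⟩
      exact restrictedRightMul_bracket_apply_single_zero hf hb z z'
    · rintro _ ⟨m, rfl⟩
      exact restrictedRightMul_self_apply_single_zero hf m
  have hrange : finrank ℂ (LinearMap.range f) = n + 4 := by
    simp [LinearMap.finrank_range_of_inj hf.injective]
  have hΛ : finrank ℂ ↥(bracketSpan b ⊤ ⊤ ⊔ LinearMap.range f) < n + 6 := by
    rw [← hdim]
    refine Submodule.finrank_lt fun h => ?_
    rw [hsolv.eq_top_of_bracketSpan_sup_eq_top hf.isIdeal h, finrank_top, hdim] at hrange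
    omega
  have hker : n + 5 ≤ finrank ℂ (LinearMap.ker α) := by
    have := α.finrank_range_add_finrank_ker
    have := (LinearMap.range α).finrank_le
    simp only [finrank_self] at *
    omega
  obtain ⟨w, hwα, hwN, hLL⟩ :=
    Submodule.exists_notMem_le_sup_span le_sup_right hΛα (by omega) (by omega)
  exact ⟨w, hwα, hwN, le_sup_left.trans hLL⟩

end NilradicalFiliform

theorem statement9 (n : ℕ) (hn : 4 ≤ n) {L : Type*}
    [AddCommGroup L] [Module ℂ L] [FiniteDimensional ℂ L]
    (b : L →ₗ[ℂ] L →ₗ[ℂ] L) (hb : IsLeibniz b)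
    (hsolv : IsSolvableAlg b) (hnonlie : ∃ x : L, b x x ≠ 0)
    (hdim : Module.finrank ℂ L = n + 2)
    (hnil : NilradicalIso b (bilin n (cNn n))) :
    False := by
  obtain ⟨n, rfl⟩ := Nat.exists_eq_add_of_le' hn
  obtain ⟨_, ⟨⟨hideal, -⟩, hmax⟩, f, hinj, rfl, hmorph⟩ := hnil
  obtain ⟨g, hgf⟩ := f.exists_leftInverse_of_injective (LinearMap.ker_eq_bot.mpr hinj)
  have hf : IsIdealEmbedding b (bilin (n + 4) (cNn (n + 4))) f g := ⟨hgf, hideal, hmorph⟩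
  have hsq := squareSpan_le_span_single_last hb hf hmax
  have hweight := derivWeight_restrictedRightMul_eq_zero hf hb
    (bracket_single_last_left_eq_zero hb hf hsq (hb.bracket_eq_zero_of_squareSpan_le hsq hnonlie))
  obtain ⟨w, hw0, hwN, hLL⟩ := exists_notMem_range_bracketSpan_le_sup hb hf hsolv hdim
  have hw1 : restrictedRightMul b f g w (Pi.single 1 1) 1 = 0 := by
    simpa [derivWeight, hw0] using hweight w
  exact hwN <| hmax _ (isNilpotentIdeal_range_sup_span hb hf hsq hw0 hw1 hLL)
    (Submodule.mem_sup_right (Submodule.mem_span_singleton_self w))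
end

section
/- Let n ≥ 4 and let d be a derivation of the algebra F_n^1. Then there exist scalars α_1, …, α_n, β ∈ ℂ such that d(e_1) = Σ_{i=1}^{n} α_i e_i, d(e_2) = (α_1 + α_2) e_2 + Σ_{i=3}^{n−1} α_i e_i + β e_n, and d(e_i) = ((i−1)α_1 + α_2) e_i + Σ_{j=i+1}^{n} α_{j−i+2} e_j for 3 ≤ i ≤ n. -/
/-!
Only right multiplication by `e₁` survives in `F_n^1`: `[x, y] = y₁ R x` with `R e₁ = e₃` and
`R eᵢ = eᵢ₊₁` for `i ≥ 2`. Applying `d` to `[e₂, eⱼ] = 0` (`j ≥ 2`) kills the `e₁`-coefficient of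
`d eⱼ`; applying it to `e₃ = [e₁, e₁] = [e₂, e₁]` gives `R (d e₁) = R (d e₂)`, which fixes every
coefficient of `d e₂` but the last; and `d eᵢ₊₁ = R (d eᵢ) + α₁ eᵢ₊₁` determines `d eᵢ` for
`i ≥ 3` by induction, the `αᵢ` being the coefficients of `d e₁`.
-/


open Finset Module

/-- The coordinate dual to the basis vector `E n i` (1-indexed, like `E`). -/
noncomputable def coord (n i : ℕ) : (Fin n → ℂ) →ₗ[ℂ] ℂ :=
  if h : 1 ≤ i ∧ i ≤ n then LinearMap.proj ⟨i - 1, by omega⟩ else 0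

section Coord

variable {n : ℕ}

lemma coord_apply {i : ℕ} (h1 : 1 ≤ i) (h2 : i ≤ n) (v : Fin n → ℂ) :
    coord n i v = v ⟨i - 1, by omega⟩ := by
  simp [coord, h1, h2]

lemma coord_of_not_mem_Icc {i : ℕ} (h : i ∉ Icc 1 n) (v : Fin n → ℂ) : coord n i v = 0 := by
  simp [coord, mem_Icc.not.mp h]

lemma apply_eq_coord (v : Fin n → ℂ) (j : Fin n) : v j = coord n (j + 1) v := by
  rw [coord_apply (by omega) j.isLt]
  rfl

lemma ext_coord {v w : Fin n → ℂ} (h : ∀ k, 1 ≤ k → k ≤ n → coord n k v = coord n k w) :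
    v = w := by
  funext j
  rw [apply_eq_coord v, apply_eq_coord w]
  exact h _ (by omega) j.isLt

lemma coord_E (i k : ℕ) : coord n k (E n i) = if i = k ∧ 1 ≤ k ∧ k ≤ n then 1 else 0 := by
  by_cases hk : k ∈ Icc 1 n
  · rw [mem_Icc] at hk
    by_cases hi : 1 ≤ i ∧ i ≤ n
    · simp only [coord_apply hk.1 hk.2, E, dif_pos hi, Pi.single_apply, Fin.ext_iff]
      grind
    · simp only [coord_apply hk.1 hk.2, E, dif_neg hi, Pi.zero_apply]
      grind
  · simp [coord_of_not_mem_Icc hk, mem_Icc.not.mp hk]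

lemma coord_sum_smul_E (s : Finset ℕ) (c : ℕ → ℂ) {k : ℕ} (h1 : 1 ≤ k) (h2 : k ≤ n) :
    coord n k (∑ i ∈ s, c i • E n i) = if k ∈ s then c k else 0 := by
  simp [coord_E, h1, h2]

end Coord

namespace F1

variable {n : ℕ}

lemma coord_bracket (x y : Fin n → ℂ) {k : ℕ} (h1 : 1 ≤ k) (h2 : k ≤ n) :
    coord n k (bilin n (cF1 n) x y) = coord n 1 y *
      ((if k = 3 then coord n 1 x else 0) + (if 3 ≤ k then coord n (k - 1) x else 0)) := by
  rw [coord_apply h1 h2]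
  simp only [bilin, LinearMap.mk₂_apply, cF1, apply_eq_coord x, apply_eq_coord y]
  rw [Fin.sum_univ_eq_sum_range (fun i => ∑ j : Fin n, coord n (i + 1) x * coord n (j + 1) y *
    if (j : ℕ) = 0 ∧ (i = 0 ∧ k - 1 = 2 ∨ 1 ≤ i ∧ k - 1 = i + 1) then 1 else 0)]
  have hsummand : ∀ i ∈ range n, (∑ j : Fin n, coord n (i + 1) x * coord n (j + 1) y *
      if (j : ℕ) = 0 ∧ (i = 0 ∧ k - 1 = 2 ∨ 1 ≤ i ∧ k - 1 = i + 1) then 1 else 0) =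
      coord n 1 y * ((if i = 0 then (if k = 3 then coord n 1 x else 0) else 0) +
        (if i = k - 2 then (if 3 ≤ k then coord n (k - 1) x else 0) else 0)) := by
    intro i _
    rw [Fin.sum_univ_eq_sum_range (fun j => coord n (i + 1) x * coord n (j + 1) y *
      if j = 0 ∧ (i = 0 ∧ k - 1 = 2 ∨ 1 ≤ i ∧ k - 1 = i + 1) then 1 else 0),
      sum_eq_single 0 (fun j _ hj => by simp [hj]) (fun h => by simp at h; omega)]
    grind
  rw [sum_congr rfl hsummand, ← mul_sum, sum_add_distrib,
    sum_ite_eq', sum_ite_eq']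
  grind

lemma bracket_eq_coord_smul (x y : Fin n → ℂ) :
    bilin n (cF1 n) x y = coord n 1 y • bilin n (cF1 n) x (E n 1) := by
  refine ext_coord fun k h1 h2 => ?_
  simp [coord_bracket _ _ h1 h2, coord_E, show 1 ≤ n by omega]

lemma bracket_E_of_two_le (x : Fin n → ℂ) {j : ℕ} (hj : 2 ≤ j) :
    bilin n (cF1 n) x (E n j) = 0 := by
  rw [bracket_eq_coord_smul, coord_E, if_neg (by omega), zero_smul]

lemma coord_bracket_E_one (x : Fin n → ℂ) {k : ℕ} (h1 : 1 ≤ k) (h2 : k ≤ n) :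
    coord n k (bilin n (cF1 n) x (E n 1)) =
      (if k = 3 then coord n 1 x else 0) + (if 3 ≤ k then coord n (k - 1) x else 0) := by
  simp [coord_bracket _ _ h1 h2, coord_E, show 1 ≤ n by omega]

lemma bracket_E_one_E_one : bilin n (cF1 n) (E n 1) (E n 1) = E n 3 := by
  refine ext_coord fun k h1 h2 => ?_
  simp only [coord_bracket_E_one _ h1 h2, coord_E]
  grind

lemma bracket_E_E_one {i : ℕ} (hi : 2 ≤ i) : bilin n (cF1 n) (E n i) (E n 1) = E n (i + 1) := by
  refine ext_coord fun k h1 h2 => ?_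
  simp only [coord_bracket_E_one _ h1 h2, coord_E]
  grind

section Derivation

variable {d : (Fin n → ℂ) →ₗ[ℂ] (Fin n → ℂ)} (hd : IsDerivation (bilin n (cF1 n)) d)
include hd

lemma derivation_bracket_E_one (x : Fin n → ℂ) :
    d (bilin n (cF1 n) x (E n 1)) =
      bilin n (cF1 n) (d x) (E n 1) + coord n 1 (d (E n 1)) • bilin n (cF1 n) x (E n 1) := by
  rw [hd, bracket_eq_coord_smul x]

lemma coord_one_derivation_E (h3 : 3 ≤ n) {j : ℕ} (hj : 2 ≤ j) : coord n 1 (d (E n j)) = 0 := by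
  have h := hd (E n 2) (E n j)
  rw [bracket_E_of_two_le _ hj, bracket_E_of_two_le _ hj, map_zero, zero_add,
    bracket_eq_coord_smul, bracket_E_E_one le_rfl] at h
  simpa [coord_E, h3] using (congrArg (coord n 3) h).symm

lemma bracket_derivation_E_two_E_one :
    bilin n (cF1 n) (d (E n 2)) (E n 1) = bilin n (cF1 n) (d (E n 1)) (E n 1) := by
  have h1 := derivation_bracket_E_one hd (E n 1)
  have h2 := derivation_bracket_E_one hd (E n 2)
  rw [bracket_E_one_E_one] at h1
  rw [bracket_E_E_one le_rfl] at h2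
  exact add_right_cancel (h2.symm.trans h1)

lemma coord_derivation_E_two (h3 : 3 ≤ n) {k : ℕ} (h2 : 2 ≤ k) (hk : k < n) :
    coord n k (d (E n 2)) =
      (if k = 2 then coord n 1 (d (E n 1)) else 0) + coord n k (d (E n 1)) := by
  have h := congrArg (coord n (k + 1)) (bracket_derivation_E_two_E_one hd)
  simp only [coord_bracket_E_one _ (by omega : 1 ≤ k + 1) hk,
    coord_one_derivation_E hd h3 le_rfl, Nat.add_sub_cancel] at h
  grind

lemma derivation_E_three :
    d (E n 3) = bilin n (cF1 n) (d (E n 1)) (E n 1) + coord n 1 (d (E n 1)) • E n 3 := by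
  rw [← bracket_E_one_E_one, derivation_bracket_E_one hd, bracket_E_one_E_one]

lemma derivation_E_succ {i : ℕ} (hi : 2 ≤ i) :
    d (E n (i + 1)) =
      bilin n (cF1 n) (d (E n i)) (E n 1) + coord n 1 (d (E n 1)) • E n (i + 1) := by
  rw [← bracket_E_E_one hi, derivation_bracket_E_one hd, bracket_E_E_one hi]

lemma coord_derivation_E_of_three_le {i : ℕ} (hi : 3 ≤ i) {k : ℕ} (h1 : 1 ≤ k) (hk : k ≤ n) :
    coord n k (d (E n i)) =
      (if k = i then ((i : ℂ) - 1) * coord n 1 (d (E n 1)) + coord n 2 (d (E n 1)) else 0) +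
        (if i < k then coord n (k - i + 2) (d (E n 1)) else 0) := by
  induction i, hi using Nat.le_induction generalizing k with
  | base =>
    rw [derivation_E_three hd, map_add, map_smul, coord_bracket_E_one _ h1 hk, coord_E, smul_eq_mul]
    grind
  | succ i hi ih =>
    rw [derivation_E_succ hd (by omega), map_add, map_smul, coord_bracket_E_one _ h1 hk, coord_E,
      smul_eq_mul]
    grind

end Derivation

end F1

theorem statement12 (n : ℕ) (hn : 4 ≤ n)
    (d : (Fin n → ℂ) →ₗ[ℂ] (Fin n → ℂ)) (hd : IsDerivation (bilin n (cF1 n)) d) :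
    ∃ (a : ℕ → ℂ) (β : ℂ),
      d (E n 1) = ∑ i ∈ Finset.Icc 1 n, a i • E n i ∧
      d (E n 2) = (a 1 + a 2) • E n 2 + (∑ i ∈ Finset.Icc 3 (n-1), a i • E n i) + β • E n n ∧
      ∀ i ∈ Finset.Icc 3 n, d (E n i) =
        (((i : ℂ) - 1) * a 1 + a 2) • E n i + ∑ j ∈ Finset.Icc (i+1) n, a (j - i + 2) • E n j := by
  refine ⟨fun i => coord n i (d (E n 1)), coord n n (d (E n 2)), ?_, ?_, ?_⟩
  · refine ext_coord fun k h1 h2 => ?_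
    simp [coord_sum_smul_E _ _ h1 h2, h1, h2]
  · refine ext_coord fun k h1 h2 => ?_
    simp only [map_add, map_smul, coord_E, coord_sum_smul_E _ _ h1 h2, mem_Icc, smul_eq_mul]
    rcases (show k = 1 ∨ (2 ≤ k ∧ k < n) ∨ k = n by omega) with rfl | ⟨hk2, hkn⟩ | rfl
    · simp [F1.coord_one_derivation_E hd (by omega) le_rfl, show n ≠ 1 by omega]
    · rw [F1.coord_derivation_E_two hd (by omega) hk2 hkn]
      grind
    · grind
  · intro i hi
    rw [mem_Icc] at hi
    refine ext_coord fun k h1 h2 => ?_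
    simp only [map_add, map_smul, coord_E, coord_sum_smul_E _ _ h1 h2, mem_Icc, smul_eq_mul,
      F1.coord_derivation_E_of_three_le hd hi.1 h1 h2]
    grind
end

section
/- Let n ≥ 4 and let d be a derivation of the algebra F_n^2. Then there exist scalars α_1, …, α_n, β, γ ∈ ℂ such that d(e_1) = Σ_{i=1}^{n} α_i e_i, d(e_2) = β e_2 + γ e_n, and d(e_i) = (i−1)α_1 e_i + Σ_{j=i+1}^{n} α_{j−i+2} e_j for 3 ≤ i ≤ n. -/
open Finset Module

/-!
The bracket of `F_n^2` satisfies `[x, y] = y_1 [x, e_1]`, where `y_1` is the `e_1`-coordinate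
of `y`, so `[x, d e_1] = α_1 [x, e_1]` for every derivation `d`. Applying `d` to `[e_1, e_1] = e_3`
and to `[e_i, e_1] = e_{i+1}` gives `d e_3 = [d e_1, e_1] + α_1 e_3` and
`d e_{i+1} = [d e_i, e_1] + α_1 e_{i+1}`, which determine `d e_i` for `i ≥ 3` by induction.
Applying `d` to `[e_2, e_1] = 0` gives `[d e_2, e_1] = 0`, and the kernel of `x ↦ [x, e_1]` is
spanned by `e_2` and `e_n`.
-/

section
variable {n : ℕ}

theorem E_apply (i : ℕ) (k : Fin n) : E n i k = if k.val + 1 = i then 1 else 0 := by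
  unfold E
  split_ifs <;> simp [Pi.single_apply, Fin.ext_iff] <;> omega

theorem dotProduct_E_succ (x : Fin n → ℂ) (k : Fin n) : x ⬝ᵥ E n (k.val + 1) = x k := by
  simp [dotProduct, E_apply, Fin.val_inj]

theorem sum_smul_E_apply (f : ℕ → ℂ) (s : Finset ℕ) (k : Fin n) :
    (∑ i ∈ s, f i • E n i) k = if k.val + 1 ∈ s then f (k.val + 1) else 0 := by
  simp [Finset.sum_apply, E_apply]

theorem eq_sum_smul_E (x : Fin n → ℂ) : x = ∑ i ∈ Icc 1 n, (x ⬝ᵥ E n i) • E n i := by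
  funext k
  rw [sum_smul_E_apply, if_pos (mem_Icc.2 ⟨by omega, k.isLt⟩), dotProduct_E_succ]

theorem sum_smul_E_succ (f : ℕ → ℂ) (lo : ℕ) :
    ∑ j ∈ Icc lo n, f j • E n (j + 1) = ∑ j ∈ Icc (lo + 1) n, f (j - 1) • E n j := by
  funext k
  simp [Finset.sum_apply, E_apply]

theorem bilin_cF2_apply (x y : Fin n → ℂ) (k : Fin n) :
    bilin n (cF2 n) x y k = y ⟨0, k.pos⟩ *
      (if k.val = 2 then x ⟨0, k.pos⟩
        else if 3 ≤ k.val then x ⟨k.val - 1, by omega⟩ else 0) := by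
  have h0 (j : Fin n) : (j.val = 0) = (j = ⟨0, k.pos⟩) := by rw [Fin.ext_iff]
  simp only [bilin, LinearMap.mk₂_apply, cF2, mul_ite, mul_one, mul_zero, h0, ite_and,
    Finset.sum_ite_eq', Finset.mem_univ, if_true]
  simp only [Fin.ext_iff]
  split_ifs with h2 h3
  · rw [Fintype.sum_eq_single ⟨0, k.pos⟩, if_pos (by simp [h2]), mul_comm]
    intro i hi
    have : i.val ≠ 0 := fun h => hi (Fin.ext h)
    rw [if_neg (by omega)]
  · rw [Fintype.sum_eq_single ⟨k.val - 1, by omega⟩, if_pos (by simp; omega), mul_comm]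
    intro i hi
    have : i.val ≠ k.val - 1 := fun h => hi (Fin.ext h)
    rw [if_neg (by omega)]
  · exact Fintype.sum_eq_zero _ fun i => if_neg (by omega)

theorem bilin_cF2_eq_smul (x y : Fin n → ℂ) :
    bilin n (cF2 n) x y = (y ⬝ᵥ E n 1) • bilin n (cF2 n) x (E n 1) := by
  funext k
  rw [Pi.smul_apply, bilin_cF2_apply, bilin_cF2_apply, ← dotProduct_E_succ y ⟨0, k.pos⟩,
    E_apply]
  simp

theorem bilin_cF2_E_one_E_one : bilin n (cF2 n) (E n 1) (E n 1) = E n 3 := by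
  funext k
  simp only [bilin_cF2_apply, E_apply]
  split_ifs <;> grind

theorem bilin_cF2_E_E_one {i : ℕ} (hi : 3 ≤ i) :
    bilin n (cF2 n) (E n i) (E n 1) = E n (i + 1) := by
  funext k
  simp only [bilin_cF2_apply, E_apply]
  split_ifs <;> grind

theorem bilin_cF2_E_two_E_one : bilin n (cF2 n) (E n 2) (E n 1) = 0 := by
  funext k
  simp only [bilin_cF2_apply, E_apply, Pi.zero_apply]
  split_ifs <;> grind

theorem eq_of_bilin_cF2_E_one_eq_zero (hn : 3 ≤ n) {w : Fin n → ℂ}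
    (hw : bilin n (cF2 n) w (E n 1) = 0) :
    w = (w ⬝ᵥ E n 2) • E n 2 + (w ⬝ᵥ E n n) • E n n := by
  have hw0 (m : Fin n) (h1 : m.val ≠ 1) (hn' : m.val + 1 ≠ n) : w m = 0 := by
    rcases Nat.eq_zero_or_pos m.val with h0 | h0
    · rw [show m = ⟨0, by omega⟩ from Fin.ext h0]
      simpa [bilin_cF2_apply, E_apply] using congrFun hw ⟨2, by omega⟩
    · simpa [bilin_cF2_apply, E_apply, h1, Nat.two_le_iff, h0.ne'] using
        congrFun hw ⟨m.val + 1, by omega⟩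
  funext k
  simp only [Pi.add_apply, Pi.smul_apply, smul_eq_mul, E_apply]
  split_ifs with h2 hn' hn'
  · omega
  · rw [← h2, dotProduct_E_succ, mul_one, mul_zero, add_zero]
  · rw [← dotProduct_E_succ w k, hn', mul_one, mul_zero, zero_add]
  · rw [mul_zero, mul_zero, add_zero, hw0 k (by omega) hn']

noncomputable def f2DerivValue (n : ℕ) (a : ℕ → ℂ) (i : ℕ) : Fin n → ℂ :=
  (((i : ℂ) - 1) * a 1) • E n i + ∑ j ∈ Icc (i + 1) n, a (j - i + 2) • E n j

theorem bilin_cF2_f2DerivValue_add (a : ℕ → ℂ) {i : ℕ} (hi : 3 ≤ i) :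
    bilin n (cF2 n) (f2DerivValue n a i) (E n 1) + a 1 • E n (i + 1) =
      f2DerivValue n a (i + 1) := by
  have hsum : ∑ j ∈ Icc (i + 1) n, a (j - i + 2) • bilin n (cF2 n) (E n j) (E n 1) =
      ∑ j ∈ Icc (i + 1 + 1) n, a (j - (i + 1) + 2) • E n j := by
    rw [sum_congr rfl fun j hj => by rw [bilin_cF2_E_E_one (by simp at hj; omega)], sum_smul_E_succ]
    simp only [Nat.sub_sub, add_comm 1 i]
  simp only [f2DerivValue, map_add, map_smul, map_sum, LinearMap.add_apply, LinearMap.smul_apply,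
    LinearMap.sum_apply, bilin_cF2_E_E_one hi, hsum]
  push_cast
  module

theorem bilin_cF2_sum_smul_E_add (a : ℕ → ℂ) :
    bilin n (cF2 n) (∑ i ∈ Icc 1 n, a i • E n i) (E n 1) + a 1 • E n 3 =
      f2DerivValue n a 3 := by
  funext k
  have hk := k.isLt
  obtain h | h | h : k.val = 2 ∨ 3 ≤ k.val ∨ k.val < 2 := by omega
  · simp [f2DerivValue, bilin_cF2_apply, E_apply, h, show 1 ≤ n by omega]
    ring
  · simp [f2DerivValue, bilin_cF2_apply, E_apply, h, hk, show k.val ≠ 0 by omega,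
      show k.val ≠ 2 by omega, show k.val - 1 + 1 = k.val by omega,
      show k.val - 2 + 2 = k.val by omega]
  · simp [f2DerivValue, bilin_cF2_apply, E_apply, h.ne, show ¬3 ≤ k.val by omega]

theorem IsDerivation.cF2_apply_E_two (hn : 3 ≤ n)
    {d : (Fin n → ℂ) →ₗ[ℂ] (Fin n → ℂ)} (hd : IsDerivation (bilin n (cF2 n)) d) :
    d (E n 2) = (d (E n 2) ⬝ᵥ E n 2) • E n 2 + (d (E n 2) ⬝ᵥ E n n) • E n n := by
  refine eq_of_bilin_cF2_E_one_eq_zero hn ?_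
  have h := hd (E n 2) (E n 1)
  rwa [bilin_cF2_E_two_E_one, map_zero, bilin_cF2_eq_smul (E n 2), bilin_cF2_E_two_E_one, smul_zero,
    add_zero, eq_comm] at h

theorem IsDerivation.cF2_apply_E {d : (Fin n → ℂ) →ₗ[ℂ] (Fin n → ℂ)}
    (hd : IsDerivation (bilin n (cF2 n)) d) {i : ℕ} (hi : 3 ≤ i) :
    d (E n i) = f2DerivValue n (fun j => d (E n 1) ⬝ᵥ E n j) i := by
  have hbv (x : Fin n → ℂ) :
      bilin n (cF2 n) x (d (E n 1)) = (d (E n 1) ⬝ᵥ E n 1) • bilin n (cF2 n) x (E n 1) :=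
    bilin_cF2_eq_smul x _
  induction i, hi using Nat.le_induction with
  | base =>
    rw [← bilin_cF2_E_one_E_one, hd, hbv, bilin_cF2_E_one_E_one, ← bilin_cF2_sum_smul_E_add,
      ← eq_sum_smul_E]
  | succ i hi ih =>
    rw [← bilin_cF2_E_E_one hi, hd, ih, hbv, bilin_cF2_E_E_one hi,
      bilin_cF2_f2DerivValue_add _ hi]

end

theorem statement16 (n : ℕ) (hn : 4 ≤ n)
    (d : (Fin n → ℂ) →ₗ[ℂ] (Fin n → ℂ)) (hd : IsDerivation (bilin n (cF2 n)) d) :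
    ∃ (a : ℕ → ℂ) (β γ : ℂ),
      d (E n 1) = ∑ i ∈ Finset.Icc 1 n, a i • E n i ∧
      d (E n 2) = β • E n 2 + γ • E n n ∧
      ∀ i ∈ Finset.Icc 3 n, d (E n i) =
        (((i : ℂ) - 1) * a 1) • E n i + ∑ j ∈ Finset.Icc (i+1) n, a (j - i + 2) • E n j :=
  ⟨_, _, _, eq_sum_smul_E _, hd.cF2_apply_E_two (by omega),
    fun _ hi => hd.cF2_apply_E (mem_Icc.1 hi).1⟩
end
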